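/- arXiv:2106.11788 — 10 statements merged into one kernel-verified Lean document; each statement's English description precedes it below -/
import Mathlib

section
/- Let n ≥ 2 and let p(x) = a_0 + a_1 x + ... + a_r x^r be a polynomial with integer coefficients such that p(α+i) ≡ 0 (mod n) for all i ∈ {0,1,...,r}, for some integer α. Then a_k · r! ≡ 0 (mod n) for every k ∈ {0,1,...,r}. -/
/-!
The iterated forward differences `Δᵏ p (α)`, `k ≤ r`, are integer combinations of the values
`p (α + i)`, `i ≤ r`, hence divisible by `n`. Newton's interpolation formula
`r! p(x) = ∑ₖ (r!/k!) Δᵏ p(α) (x - α)(x - α - 1)⋯(x - α - k + 1)` for `deg p ≤ r` then exhibits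
`r! p` as a polynomial with all coefficients divisible by `n`.
-/

open Finset Polynomial fwdDiff

theorem dvd_fwdDiff_iter_of_forall_dvd {M R : Type*} [AddCommMonoid M] [CommRing R]
    {d : R} {f : M → R} {s y : M} {j : ℕ} (h : ∀ i ≤ j, d ∣ f (y + i • s)) :
    d ∣ (Δ_[s])^[j] f y := by
  rw [fwdDiff_iter_eq_sum_shift]
  refine dvd_sum fun i hi => ?_
  rw [zsmul_eq_mul]
  exact (h i (Nat.lt_succ_iff.1 (mem_range.1 hi))).mul_left _

namespace Polynomial

variable {R : Type*} [CommRing R]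

theorem eval_add_natCast_eq_sum_fwdDiff_iter {P : R[X]} {r : ℕ} (hP : P.natDegree ≤ r)
    (y : R) (m : ℕ) :
    P.eval (y + m) = ∑ k ∈ range (r + 1), m.choose k • (Δ_[1])^[k] P.eval y := by
  have hshift := shift_eq_sum_fwdDiff_iter 1 P.eval m y
  rw [nsmul_one] at hshift
  rw [hshift, sum_subset (range_subset_range.2 (Nat.le_add_right (m + 1) r)),
    sum_subset (range_subset_range.2 (by omega : r + 1 ≤ m + 1 + r))]
  · intro k hk hkr
    rw [fwdDiff_iter_eq_zero_of_degree_lt (by simp at hk hkr; omega), Pi.zero_apply, smul_zero]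
  · intro k hk hkm
    rw [Nat.choose_eq_zero_of_lt (by simp at hk hkm; omega), zero_smul]

variable [IsDomain R] [CharZero R]

theorem factorial_mul_eq_sum_fwdDiff_iter_mul_descPochhammer {P : R[X]} {r : ℕ}
    (hP : P.natDegree ≤ r) (y : R) :
    C (r.factorial : R) * P = ∑ k ∈ range (r + 1),
      C ((r.factorial / k.factorial : ℕ) * (Δ_[1])^[k] P.eval y) *
        (descPochhammer R k).comp (X - C y) := by
  refine eq_of_infinite_eval_eq _ _ (Set.infinite_of_injective_forall_mem
    (f := fun m : ℕ => y + m) (fun a b hab => by simpa using hab) fun m => ?_)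
  simp only [Set.mem_ofPred_eq, eval_mul, eval_C, eval_finsetSum, eval_comp, eval_sub, eval_X,
    add_sub_cancel_left, descPochhammer_eval_eq_descFactorial,
    eval_add_natCast_eq_sum_fwdDiff_iter hP, mul_sum]
  refine sum_congr rfl fun k hk => ?_
  rw [Nat.descFactorial_eq_factorial_mul_choose, nsmul_eq_mul]
  have hr : (r.factorial : R) = (r.factorial / k.factorial : ℕ) * k.factorial := by
    rw [← Nat.cast_mul,
      Nat.div_mul_cancel (Nat.factorial_dvd_factorial (Nat.lt_succ_iff.1 (mem_range.1 hk)))]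
  rw [hr]
  push_cast
  ring

end Polynomial

theorem coeff_mul_factorial_dvd_of_vanishes_consecutive_general
    (n : ℕ) (r : ℕ) (a : ℕ → ℤ) (α : ℤ)
    (h : ∀ i : ℕ, i ≤ r → (n : ℤ) ∣ ∑ k ∈ Finset.range (r + 1), a k * (α + i) ^ k) :
    ∀ k : ℕ, k ≤ r → (n : ℤ) ∣ a k * (r.factorial : ℤ) := by
  intro k hk
  set p : ℤ[X] := ∑ k ∈ range (r + 1), C (a k) * X ^ k
  have hcoeff (m : ℕ) : p.coeff m = if m < r + 1 then a m else 0 := by simp [p]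
  have hdeg : p.natDegree ≤ r :=
    natDegree_le_iff_coeff_eq_zero.2 fun m hm => by rw [hcoeff, if_neg (by omega)]
  have hfwdDiff (j : ℕ) (hj : j ≤ r) : (n : ℤ) ∣ (Δ_[1])^[j] p.eval α :=
    dvd_fwdDiff_iter_of_forall_dvd fun i hi => by
      simpa [p, eval_finsetSum] using h i (hi.trans hj)
  have hC : C (n : ℤ) ∣ C (r.factorial : ℤ) * p := by
    rw [factorial_mul_eq_sum_fwdDiff_iter_mul_descPochhammer hdeg α]
    exact dvd_sum fun j hj => dvd_mul_of_dvd_left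
      (map_dvd C ((hfwdDiff j (Nat.lt_succ_iff.1 (mem_range.1 hj))).mul_left _)) _
  simpa [coeff_C_mul, hcoeff, Nat.lt_succ_of_le hk, mul_comm] using
    (C_dvd_iff_dvd_coeff _ _).1 hC k

/-- If `p(x) = a₀ + a₁ x + ⋯ + a_r x^r` vanishes modulo `n` on `r+1` consecutive
integers `α, α+1, …, α+r`, then `a_k ⬝ r! ≡ 0 (mod n)` for every `k ≤ r`. -/
theorem coeff_mul_factorial_dvd_of_vanishes_consecutive
    (n : ℕ) (hn : 2 ≤ n) (r : ℕ) (a : ℕ → ℤ) (α : ℤ)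
    (h : ∀ i : ℕ, i ≤ r → (n : ℤ) ∣ ∑ k ∈ Finset.range (r + 1), a k * (α + i) ^ k) :
    ∀ k : ℕ, k ≤ r → (n : ℤ) ∣ a k * (r.factorial : ℤ) :=
  coeff_mul_factorial_dvd_of_vanishes_consecutive_general n r a α h
end

section
/- Let n ≥ 2 and let p ∈ ℤ[x] be a null-polynomial modulo n of degree r (i.e., p(x) ≡ 0 (mod n) for all x ∈ ℤ). Then every coefficient a_k of p satisfies a_k · r! ≡ 0 (mod n). -/
/-!
The `m`-th forward difference of a polynomial of degree `m` is the constant `m! · a_m`, and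
forward differences of a null-polynomial modulo `n` are again null modulo `n`; so `n ∣ a_r · r!`.
Since `r!` divides every value of the falling factorial `x (x - 1) ⋯ (x - r + 1)`, subtracting
`a_r` times it leaves a null-polynomial of degree `< r`, and induction on `r` handles the
remaining coefficients.
-/

open Polynomial Nat

theorem dvd_fwdDiff_iter_apply {M R : Type*} [AddCommMonoid M] [Ring R] {a : R} {f : M → R}
    (hf : ∀ x, a ∣ f x) (h : M) (k : ℕ) (x : M) : a ∣ (fwdDiff h)^[k] f x := by
  induction k generalizing f with
  | zero => exact hf x
  | succ k ih => exact ih fun y ↦ dvd_sub (hf (y + h)) (hf y)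

namespace Polynomial

theorem dvd_leadingCoeff_mul_factorial {R : Type*} [CommRing R] {a : R} {p : R[X]}
    (hp : ∀ x, a ∣ p.eval x) : a ∣ p.leadingCoeff * p.natDegree ! := by
  simpa [p.fwdDiff_iter_degree_eq_factorial] using dvd_fwdDiff_iter_apply hp 1 p.natDegree 0

theorem dvd_coeff_mul_factorial_of_natDegree_le {R : Type*} [CommRing R] {a : R} {p : R[X]}
    {m : ℕ} (hm : p.natDegree ≤ m) (hp : ∀ x, a ∣ p.eval x) : a ∣ p.coeff m * m ! := by
  rcases hm.eq_or_lt with rfl | hlt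
  · exact dvd_leadingCoeff_mul_factorial hp
  · simp [coeff_eq_zero_of_natDegree_lt hlt]

theorem natDegree_sub_C_coeff_mul_le {R : Type*} [Ring R] {p q : R[X]} {r : ℕ}
    (hp : p.natDegree ≤ r + 1) (hq : q.Monic) (hqr : q.natDegree = r + 1) :
    (p - C (p.coeff (r + 1)) * q).natDegree ≤ r := by
  have hle : (p - C (p.coeff (r + 1)) * q).natDegree ≤ r + 1 :=
    (natDegree_sub_le _ _).trans (max_le hp ((natDegree_C_mul_le _ _).trans hqr.le))
  have htop : (p - C (p.coeff (r + 1)) * q).coeff (r + 1) = 0 := by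
    rw [coeff_sub, coeff_C_mul, ← hqr, hq.coeff_natDegree, mul_one, sub_self]
  exact natDegree_le_pred hle htop

theorem factorial_dvd_descPochhammer_eval (m : ℕ) (x : ℤ) :
    (m ! : ℤ) ∣ (descPochhammer ℤ m).eval x := by
  rw [eval_eq_smeval, Ring.descPochhammer_eq_factorial_smul_choose, nsmul_eq_mul]
  exact dvd_mul_right _ _

theorem dvd_coeff_mul_factorial_of_forall_dvd_eval {n : ℤ} {p : ℤ[X]} {r : ℕ}
    (hr : p.natDegree ≤ r) (hp : ∀ x, n ∣ p.eval x) (k : ℕ) : n ∣ p.coeff k * r ! := by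
  induction r generalizing p with
  | zero =>
    rw [eq_C_of_natDegree_eq_zero (Nat.le_zero.mp hr), coeff_C]
    split_ifs
    · simpa [← coeff_zero_eq_eval_zero] using hp 0
    · simp
  | succ r ih =>
    set a := p.coeff (r + 1)
    set D := descPochhammer ℤ (r + 1)
    have ha : n ∣ a * (r + 1)! := dvd_coeff_mul_factorial_of_natDegree_le hr hp
    have hq : ∀ x, n ∣ (p - C a * D).eval x := fun x ↦ by
      rw [eval_sub, eval_mul, eval_C]
      exact dvd_sub (hp x) (ha.trans (mul_dvd_mul_left a (factorial_dvd_descPochhammer_eval _ x)))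
    have hqr : (p - C a * D).natDegree ≤ r :=
      natDegree_sub_C_coeff_mul_le hr (monic_descPochhammer ℤ _) (descPochhammer_natDegree ℤ _)
    have hcoeff : p.coeff k * (r + 1)! =
        (p - C a * D).coeff k * r ! * (r + 1) + a * (r + 1)! * D.coeff k := by
      rw [coeff_sub, coeff_C_mul, factorial_succ]
      push_cast
      ring
    rw [hcoeff]
    exact dvd_add (dvd_mul_of_dvd_left (ih hqr hq) _) (dvd_mul_of_dvd_left ha _)

end Polynomial

theorem coeff_mul_factorial_dvd_of_null_polynomial_general
    (n : ℕ) (p : Polynomial ℤ) (r : ℕ) (hr : p.natDegree = r)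
    (h : ∀ x : ℤ, (n : ℤ) ∣ p.eval x) :
    ∀ k : ℕ, (n : ℤ) ∣ p.coeff k * (r.factorial : ℤ) :=
  dvd_coeff_mul_factorial_of_forall_dvd_eval hr.le h

/-- If `p ∈ ℤ[x]` is a null-polynomial modulo `n` of degree `r`, then every
coefficient `a_k` of `p` satisfies `a_k ⬝ r! ≡ 0 (mod n)`. -/
theorem coeff_mul_factorial_dvd_of_null_polynomial
    (n : ℕ) (hn : 2 ≤ n) (p : Polynomial ℤ) (r : ℕ) (hr : p.natDegree = r)
    (h : ∀ x : ℤ, (n : ℤ) ∣ p.eval x) :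
    ∀ k : ℕ, (n : ℤ) ∣ p.coeff k * (r.factorial : ℤ) :=
  coeff_mul_factorial_dvd_of_null_polynomial_general n p r hr h
end

section
/- For every integer n ≥ 2, s(ℤ/nℤ) = s(n), where s(ℤ/nℤ) is the least m such that the function x ↦ x^m on ℤ/nℤ agrees with some polynomial in (ℤ/nℤ)[x] of degree strictly less than m, and s(n) = min{k ∈ ℕ : n ∣ k!} is the Smarandache function. -/
/-- The Smarandache function: the least `k` with `n ∣ k!`. -/
noncomputable def smarandache (n : ℕ) : ℕ := sInf {k : ℕ | n ∣ Nat.factorial k}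

/-!
The `m`-th forward difference of `x ↦ x ^ m` is the constant `m!`, while that of a polynomial of
degree `< m` vanishes; so `x ↦ x ^ m` agrees with such a polynomial on `ℤ/nℤ` only if `n ∣ m!`.
Conversely, if `n ∣ m!` then the falling factorial `x (x - 1) ⋯ (x - m + 1)`, whose values
`k.descFactorial m` at naturals are multiples of `m!`, vanishes on `ℤ/nℤ`, and
`X ^ m` minus it has degree `< m`.
-/

open Polynomial Nat

section CommRing

variable {R : Type*} [CommRing R]

theorem factorial_eq_zero_of_eval_eq_pow {p : R[X]} {m : ℕ} (hdeg : p.natDegree < m)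
    (hp : ∀ x, p.eval x = x ^ m) : (m ! : R) = 0 := by
  have hdiff := fwdDiff_iter_eq_factorial (R := R) (n := m)
  rw [← funext hp, fwdDiff_iter_eq_zero_of_degree_lt hdeg] at hdiff
  exact (congrFun hdiff 0).symm

theorem natDegree_X_pow_sub_descPochhammer_lt {m : ℕ} (hm : m ≠ 0) :
    (X ^ m - descPochhammer R m).natDegree < m := by
  have hℤ : (X ^ m - descPochhammer ℤ m).natDegree < m :=
    (isMonicOfDegree_X_pow ℤ m).natDegree_sub_lt hm
      ⟨descPochhammer_natDegree ℤ m, monic_descPochhammer ℤ m⟩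
  calc (X ^ m - descPochhammer R m).natDegree
      = ((X ^ m - descPochhammer ℤ m).map (Int.castRingHom R)).natDegree := by
        simp only [Polynomial.map_sub, Polynomial.map_pow, map_X, descPochhammer_map]
    _ ≤ (X ^ m - descPochhammer ℤ m).natDegree := natDegree_map_le
    _ < m := hℤ

theorem descPochhammer_eval_natCast_eq_zero {m : ℕ} (hm : (m ! : R) = 0) (k : ℕ) :
    (descPochhammer R m).eval (k : R) = 0 := by
  obtain ⟨c, hc⟩ := factorial_dvd_descFactorial k m
  rw [descPochhammer_eval_eq_descFactorial, hc, cast_mul, hm, zero_mul]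

end CommRing

theorem ZMod.exists_natDegree_lt_eval_eq_pow_iff {n m : ℕ} :
    (∃ p : (ZMod n)[X], p.natDegree < m ∧ ∀ x, p.eval x = x ^ m) ↔ m ≠ 0 ∧ n ∣ m ! := by
  constructor
  · rintro ⟨p, hdeg, hp⟩
    exact ⟨by omega, (ZMod.natCast_eq_zero_iff _ _).mp (factorial_eq_zero_of_eval_eq_pow hdeg hp)⟩
  · rintro ⟨hm, hdvd⟩
    have : NeZero n := ⟨by rintro rfl; exact factorial_ne_zero m (zero_dvd_iff.mp hdvd)⟩
    have hvanish : ∀ x : ZMod n, (descPochhammer (ZMod n) m).eval x = 0 := fun x => by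
      rw [← ZMod.natCast_zmod_val x]
      exact descPochhammer_eval_natCast_eq_zero ((ZMod.natCast_eq_zero_iff _ _).mpr hdvd) _
    exact ⟨X ^ m - descPochhammer (ZMod n) m, natDegree_X_pow_sub_descPochhammer_lt hm,
      fun x => by simp [hvanish]⟩

/-- For `n ≥ 2`, the least `m` such that `x ↦ x^m` on `ℤ/nℤ` agrees with a
polynomial of degree `< m` equals the Smarandache function `s(n)`. -/
theorem ringSmarandache_eq_smarandache (n : ℕ) (hn : 2 ≤ n) :
    sInf {m : ℕ | ∃ p : Polynomial (ZMod n), p.natDegree < m ∧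
        ∀ x : ZMod n, p.eval x = x ^ m} = smarandache n := by
  unfold smarandache
  congr 1
  ext m
  refine ZMod.exists_natDegree_lt_eval_eq_pow_iff.trans (and_iff_right_of_imp ?_)
  rintro hdvd rfl
  rw [factorial_zero, Nat.dvd_one] at hdvd
  omega
end

section
/- The function Ψ which assigns to each integer n ≥ 2 the number of functions f : ℤ/nℤ → ℤ/nℤ representable by a polynomial in (ℤ/nℤ)[x] is multiplicative: if gcd(m,n) = 1 then Ψ(mn) = Ψ(m)·Ψ(n). -/
/-!
The Chinese remainder theorem gives `ℤ/mnℤ ≃+* ℤ/mℤ × ℤ/nℤ`, and ring isomorphisms transport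
polynomial functions. Over a product ring `R × S` a polynomial acts componentwise through its
images in `R[X]` and `S[X]`, and every pair of polynomials arises this way (glue lifts with the
idempotents `(1, 0)` and `(0, 1)`), so the polynomial functions on `R × S` are exactly the maps
`Prod.map f g` with `f`, `g` polynomial functions.
-/

/-- The number of polyfunctions over `ℤ/nℤ`. -/
noncomputable def Psi (n : ℕ) : ℕ :=
  Nat.card {f : ZMod n → ZMod n // ∃ p : Polynomial (ZMod n), ∀ x, p.eval x = f x}

theorem Prod.map_inj {α β γ δ : Type*} [Nonempty α] [Nonempty β]
    {f f' : α → γ} {g g' : β → δ} :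
    Prod.map f g = Prod.map f' g' ↔ f = f' ∧ g = g' := by
  refine ⟨fun h => ?_, fun ⟨hf, hg⟩ => hf ▸ hg ▸ rfl⟩
  obtain ⟨b⟩ := ‹Nonempty β›
  obtain ⟨a⟩ := ‹Nonempty α›
  exact ⟨funext fun x => congrArg Prod.fst (congrFun h (x, b)),
    funext fun y => congrArg Prod.snd (congrFun h (a, y))⟩

open Polynomial

def polyFunctions (R : Type*) [Semiring R] : Set (R → R) :=
  {f | ∃ p : R[X], ∀ x, p.eval x = f x}

section

variable {R S : Type*} [Semiring R] [Semiring S]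

theorem comp_mem_polyFunctions (e : R ≃+* S) {f : R → R} (hf : f ∈ polyFunctions R) :
    e ∘ f ∘ e.symm ∈ polyFunctions S := by
  obtain ⟨p, hp⟩ := hf
  refine ⟨p.map (e : R →+* S), fun y => ?_⟩
  simpa [hp] using eval_map_apply (p := p) (e : R →+* S) (e.symm y)

def polyFunctionsCongr (e : R ≃+* S) : polyFunctions R ≃ polyFunctions S :=
  (e.toEquiv.arrowCongr e.toEquiv).subtypeEquiv fun f =>
    ⟨comp_mem_polyFunctions e, fun hf => by
      simpa [Function.comp_def] using comp_mem_polyFunctions e.symm hf⟩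

theorem Polynomial.eval_eq_mk_eval_map (p : (R × S)[X]) (z : R × S) :
    p.eval z = ((p.map (RingHom.fst R S)).eval z.1, (p.map (RingHom.snd R S)).eval z.2) := by
  ext
  · exact (eval_map_apply (p := p) (RingHom.fst R S) z).symm
  · exact (eval_map_apply (p := p) (RingHom.snd R S) z).symm

theorem Polynomial.exists_map_fst_map_snd (p : R[X]) (q : S[X]) :
    ∃ r : (R × S)[X], r.map (RingHom.fst R S) = p ∧ r.map (RingHom.snd R S) = q := by
  obtain ⟨p', rfl⟩ := map_surjective (RingHom.fst R S) Prod.fst_surjective p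
  obtain ⟨q', rfl⟩ := map_surjective (RingHom.snd R S) Prod.snd_surjective q
  exact ⟨C (1, 0) * p' + C (0, 1) * q', by simp, by simp⟩

theorem mem_polyFunctions_prod_iff {F : R × S → R × S} :
    F ∈ polyFunctions (R × S) ↔
      ∃ f ∈ polyFunctions R, ∃ g ∈ polyFunctions S, F = Prod.map f g := by
  constructor
  · rintro ⟨p, hp⟩
    refine ⟨_, ⟨p.map (RingHom.fst R S), fun _ => rfl⟩,
      _, ⟨p.map (RingHom.snd R S), fun _ => rfl⟩, funext fun z => ?_⟩
    rw [← hp, eval_eq_mk_eval_map]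
    rfl
  · rintro ⟨f, ⟨p, hp⟩, g, ⟨q, hq⟩, rfl⟩
    obtain ⟨r, hrp, hrq⟩ := exists_map_fst_map_snd p q
    exact ⟨r, fun z => by rw [eval_eq_mk_eval_map, hrp, hrq, hp, hq]; rfl⟩

noncomputable def polyFunctionsProdEquiv :
    polyFunctions R × polyFunctions S ≃ polyFunctions (R × S) :=
  Equiv.ofBijective
    (fun fg => ⟨Prod.map fg.1.1 fg.2.1,
      mem_polyFunctions_prod_iff.2 ⟨_, fg.1.2, _, fg.2.2, rfl⟩⟩)
    ⟨fun ⟨f, g⟩ ⟨f', g'⟩ h => by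
      obtain ⟨hf, hg⟩ := Prod.map_inj.1 (congrArg Subtype.val h)
      exact Prod.ext (Subtype.ext hf) (Subtype.ext hg),
    fun F => by
      obtain ⟨f, hf, g, hg, hF⟩ := mem_polyFunctions_prod_iff.1 F.2
      exact ⟨(⟨f, hf⟩, ⟨g, hg⟩), Subtype.ext hF.symm⟩⟩

end

theorem Psi_multiplicative_general (m n : ℕ) (h : Nat.Coprime m n) : Psi (m * n) = Psi m * Psi n :=
  calc Psi (m * n) = Nat.card (polyFunctions (ZMod m × ZMod n)) :=
        Nat.card_congr (polyFunctionsCongr (ZMod.chineseRemainder h))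
    _ = Psi m * Psi n := (Nat.card_congr polyFunctionsProdEquiv.symm).trans (Nat.card_prod _ _)

/-- `Ψ` is multiplicative: if `gcd m n = 1` then `Ψ(mn) = Ψ(m)Ψ(n)`. -/
theorem Psi_multiplicative (m n : ℕ) (hm : 2 ≤ m) (hn : 2 ≤ n)
    (h : Nat.Coprime m n) : Psi (m * n) = Psi m * Psi n :=
  Psi_multiplicative_general m n h
end

section
/- For a prime p and m ∈ ℕ, the number of polyfunctions over ℤ/p^mℤ equals p raised to the power ∑_{k=1}^{m} s(p^k), where s is the Smarandache function s(n) = min{k : n ∣ k!}. -/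
/-!
Every polynomial over `ℤ/n` is a combination of falling factorials
`(x)_k = k! · (x choose k)`, and `(x)_k` vanishes identically on `ℤ/n` as soon as `n ∣ k!`,
i.e. for `k ≥ s(n)`. Hence the polyfunctions are exactly the functions
`∑_{k < s(n)} b_k (x choose k)` with `b_k ∈ k! · ℤ/n`. The functions `(x choose k)` for
`k < s(n) ≤ n` are linearly independent, being unitriangular on the points `0, …, s(n) - 1`, so
`Ψ(n) = ∏_{k < s(n)} n / gcd(n, k!)`. For `n = p^m` the factor `p^m / gcd(p^m, k!)` is `p`
raised to the number of `j ≤ m` with `k < s(p^j)`; counting the pairs `(k, j)` the other way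
round gives the exponent `∑_{j=1}^m s(p^j)`.
-/

open Polynomial Finset Nat

section Smarandache

variable {n : ℕ}

theorem dvd_factorial_smarandache (hn : n ≠ 0) : n ∣ (smarandache n)! :=
  Nat.sInf_mem (s := {k | n ∣ k !}) ⟨n, Nat.dvd_factorial (Nat.pos_of_ne_zero hn) le_rfl⟩

theorem smarandache_le_iff_dvd_factorial (hn : n ≠ 0) {k : ℕ} :
    smarandache n ≤ k ↔ n ∣ k ! :=
  ⟨fun h => (dvd_factorial_smarandache hn).trans (factorial_dvd_factorial h),
    fun h => Nat.sInf_le h⟩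

theorem smarandache_le_self (hn : n ≠ 0) : smarandache n ≤ n :=
  (smarandache_le_iff_dvd_factorial hn).2 (Nat.dvd_factorial (Nat.pos_of_ne_zero hn) le_rfl)

end Smarandache

section DescPochhammer

variable (R : Type*) [CommRing R]

theorem X_mul_descPochhammer (k : ℕ) :
    X * descPochhammer R k = descPochhammer R (k + 1) + (k : R) • descPochhammer R k := by
  rw [descPochhammer_succ_right, ← C_mul', ← map_natCast C]
  ring

theorem span_range_descPochhammer : Submodule.span R (Set.range (descPochhammer R)) = ⊤ := by
  set S := Submodule.span R (Set.range (descPochhammer R))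
  have X_mul_mem {q : R[X]} (hq : q ∈ S) : X * q ∈ S := by
    induction hq using Submodule.span_induction with
    | mem q hq =>
      obtain ⟨k, rfl⟩ := hq
      rw [X_mul_descPochhammer]
      exact add_mem (Submodule.subset_span ⟨k + 1, rfl⟩)
        (Submodule.smul_mem _ _ (Submodule.subset_span ⟨k, rfl⟩))
    | zero => simp
    | add q r _ _ hq hr => rw [mul_add]; exact add_mem hq hr
    | smul a q _ hq => rw [mul_smul_comm]; exact Submodule.smul_mem _ a hq
  refine Submodule.eq_top_iff'.2 fun q => ?_
  induction q using Polynomial.induction_on with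
  | C a =>
    rw [← mul_one (C a), C_mul', ← descPochhammer_zero]
    exact Submodule.smul_mem _ a (Submodule.subset_span ⟨0, rfl⟩)
  | add q r hq hr => exact add_mem hq hr
  | monomial k a h => rw [pow_succ, ← mul_assoc, mul_comm _ X]; exact X_mul_mem h

end DescPochhammer

section ZMod

variable {n : ℕ}

def binomFun (n k : ℕ) (x : ZMod n) : ZMod n := (x.val.choose k : ℕ)

theorem linearIndependent_binomFun {N : ℕ} (hN : N ≤ n) :
    LinearIndependent (ZMod n) fun k : Fin N => binomFun n k := by
  refine Fintype.linearIndependent_iff.2 fun c hc => ?_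
  suffices ∀ j (hj : j < N), c ⟨j, hj⟩ = 0 from fun k => this k k.2
  intro j
  induction j using Nat.strong_induction_on with
  | _ j ih =>
  intro hj
  have hcj := congrFun hc (j : ZMod n)
  simp only [Finset.sum_apply, Pi.smul_apply, smul_eq_mul, binomFun,
    ZMod.val_natCast_of_lt (hj.trans_le hN), Pi.zero_apply] at hcj
  rwa [Finset.sum_eq_single ⟨j, hj⟩ _ (by simp), choose_self, cast_one, mul_one] at hcj
  intro k _ hk
  rcases lt_or_gt_of_ne (Fin.val_ne_of_ne hk) with hlt | hgt
  · rw [ih k hlt k.2, zero_mul]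
  · rw [choose_eq_zero_of_lt hgt, cast_zero, mul_zero]

variable [NeZero n]

theorem eval_descPochhammer_zmod (k : ℕ) (x : ZMod n) :
    (descPochhammer (ZMod n) k).eval x = (k ! : ZMod n) * binomFun n k x := by
  rw [binomFun, ← cast_mul, ← descFactorial_eq_factorial_mul_choose,
    ← descPochhammer_eval_eq_descFactorial, ZMod.natCast_zmod_val]

theorem exists_eval_eq_sum_factorial_mul_binomFun {N : ℕ} (hN : n ∣ N !) (q : (ZMod n)[X]) :
    ∃ a : Fin N → ZMod n,
      (fun x => q.eval x) = ∑ k : Fin N, ((k ! : ZMod n) * a k) • binomFun n k := by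
  have hq : q ∈ Submodule.span (ZMod n) (Set.range (descPochhammer (ZMod n))) := by
    rw [span_range_descPochhammer]; trivial
  induction hq using Submodule.span_induction with
  | mem q hq =>
    obtain ⟨j, rfl⟩ := hq
    by_cases hj : j < N
    · refine ⟨Pi.single ⟨j, hj⟩ 1, funext fun x => ?_⟩
      simp only [Finset.sum_apply, Pi.smul_apply, smul_eq_mul]
      simp [eval_descPochhammer_zmod, Pi.single_apply]
    · refine ⟨0, funext fun x => ?_⟩
      rw [eval_descPochhammer_zmod, (ZMod.natCast_eq_zero_iff _ _).2
        (hN.trans (factorial_dvd_factorial (not_lt.1 hj)))]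
      simp
  | zero => exact ⟨0, by ext; simp⟩
  | add q r _ _ hq hr =>
    obtain ⟨a, ha⟩ := hq
    obtain ⟨b, hb⟩ := hr
    refine ⟨a + b, funext fun x => ?_⟩
    simp [congrFun ha x, congrFun hb x, mul_add, add_mul, sum_add_distrib]
  | smul c q _ hq =>
    obtain ⟨a, ha⟩ := hq
    refine ⟨c • a, funext fun x => ?_⟩
    simp only [eval_smul, congrFun ha x, Finset.sum_apply, Pi.smul_apply, smul_eq_mul, mul_sum]
    exact sum_congr rfl fun _ _ => by ring

theorem card_range_natCast_mul (c : ℕ) :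
    Nat.card (Set.range fun a : ZMod n => (c : ZMod n) * a) = n / n.gcd c := by
  have hrange : Set.range (fun a : ZMod n => (c : ZMod n) * a) =
      AddSubgroup.zmultiples (c : ZMod n) := by
    ext y
    simp only [Set.mem_range, SetLike.mem_coe, AddSubgroup.mem_zmultiples_iff, zsmul_eq_mul]
    constructor
    · rintro ⟨a, rfl⟩
      exact ⟨(a.cast : ℤ), by rw [ZMod.intCast_zmod_cast, mul_comm]⟩
    · rintro ⟨k, rfl⟩
      exact ⟨k, mul_comm _ _⟩
  rw [hrange]
  exact (Nat.card_zmultiples _).trans (ZMod.addOrderOf_coe c (NeZero.ne n))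

theorem setOf_polyfun_eq_range {N : ℕ} (hN : n ∣ N !) :
    {f : ZMod n → ZMod n | ∃ q : (ZMod n)[X], ∀ x, q.eval x = f x} =
      Set.range fun a : Fin N → ZMod n =>
        ∑ k : Fin N, ((k ! : ZMod n) * a k) • binomFun n k := by
  ext f
  constructor
  · rintro ⟨q, hq⟩
    obtain ⟨a, ha⟩ := exists_eval_eq_sum_factorial_mul_binomFun hN q
    exact ⟨a, ha.symm.trans (funext hq)⟩
  · rintro ⟨a, rfl⟩
    refine ⟨∑ k, C (a k) * descPochhammer (ZMod n) k, fun x => ?_⟩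
    simp only [eval_finsetSum, eval_mul, eval_C, eval_descPochhammer_zmod, Finset.sum_apply,
      Pi.smul_apply, smul_eq_mul]
    exact sum_congr rfl fun _ _ => by ring

end ZMod

theorem Psi_eq_prod_div_gcd_factorial {n : ℕ} (hn : n ≠ 0) :
    Psi n = ∏ k ∈ range (smarandache n), n / n.gcd k ! := by
  have : NeZero n := ⟨hn⟩
  set N := smarandache n
  set B := Fintype.linearCombination (ZMod n) fun k : Fin N => binomFun n k
  set M := Pi.map fun (k : Fin N) (a : ZMod n) => (k ! : ZMod n) * a
  have hB : Function.Injective B := linearIndependent_iff_injective_fintypeLinearCombination.1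
    (linearIndependent_binomFun (smarandache_le_self hn))
  calc Psi n = Nat.card (Set.range (B ∘ M)) := by
        rw [Psi, ← Set.coe_ofPred, setOf_polyfun_eq_range (dvd_factorial_smarandache hn)]
        rfl
    _ = Nat.card (Set.range M) := by rw [Set.range_comp, Nat.card_image_of_injective hB]
    _ = ∏ k : Fin N, Nat.card (Set.range fun a : ZMod n => (k ! : ZMod n) * a) := by
        rw [Set.range_piMap, Nat.card_congr (Equiv.Set.univPi _), Nat.card_pi]
    _ = ∏ k ∈ range N, n / n.gcd k ! := by
        simp only [card_range_natCast_mul]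
        exact Fin.prod_univ_eq_prod_range (fun k => n / n.gcd k !) N

section PrimePow

variable {p : ℕ} (hp : p.Prime)
include hp

theorem pow_div_gcd_factorial (m k : ℕ) :
    p ^ m / (p ^ m).gcd k ! = p ^ #{j ∈ Icc 1 m | k < smarandache (p ^ j)} := by
  obtain ⟨i, him, hi⟩ := (Nat.dvd_prime_pow hp).1 (Nat.gcd_dvd_left (p ^ m) k !)
  have hdvd {j : ℕ} (hjm : j ≤ m) : p ^ j ∣ k ! ↔ j ≤ i := by
    rw [← Nat.pow_dvd_pow_iff_le_right hp.one_lt, ← hi, Nat.dvd_gcd_iff,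
      and_iff_right (pow_dvd_pow p hjm)]
  have hfilter : {j ∈ Icc 1 m | k < smarandache (p ^ j)} = Icc (i + 1) m := by
    ext j
    simp only [mem_filter, mem_Icc]
    by_cases hjm : j ≤ m
    · rw [← not_le, smarandache_le_iff_dvd_factorial (pow_ne_zero j hp.ne_zero), hdvd hjm]
      omega
    · omega
  rw [hi, Nat.pow_div him hp.pos, hfilter, Nat.card_Icc]
  congr 1
  omega

theorem prod_range_smarandache_pow_div_gcd_factorial (m : ℕ) :
    ∏ k ∈ range (smarandache (p ^ m)), p ^ m / (p ^ m).gcd k ! =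
      p ^ ∑ j ∈ Icc 1 m, smarandache (p ^ j) := by
  simp only [pow_div_gcd_factorial hp, prod_pow_eq_pow_sum]
  congr 1
  refine (sum_card_bipartiteAbove_eq_sum_card_bipartiteBelow
    fun k j => k < smarandache (p ^ j)).trans (sum_congr rfl fun j hj => ?_)
  have hle : smarandache (p ^ j) ≤ smarandache (p ^ m) :=
    (smarandache_le_iff_dvd_factorial (pow_ne_zero j hp.ne_zero)).2
      ((pow_dvd_pow p (mem_Icc.1 hj).2).trans
        (dvd_factorial_smarandache (pow_ne_zero m hp.ne_zero)))
  have hrange : {k ∈ range (smarandache (p ^ m)) | k < smarandache (p ^ j)} =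
      range (smarandache (p ^ j)) := by
    ext k
    simp only [mem_filter, mem_range]
    omega
  rw [bipartiteBelow, hrange, card_range]

end PrimePow

theorem Psi_prime_pow_general (p : ℕ) (hp : p.Prime) (m : ℕ) :
    Psi (p ^ m) = p ^ (∑ k ∈ Finset.Icc 1 m, smarandache (p ^ k)) := by
  rw [Psi_eq_prod_div_gcd_factorial (pow_ne_zero m hp.ne_zero),
    prod_range_smarandache_pow_div_gcd_factorial hp]

/-- `Ψ(p^m) = p^{∑_{k=1}^m s(p^k)}` for `p` prime. -/
theorem Psi_prime_pow (p : ℕ) (hp : p.Prime) (m : ℕ) (hm : 0 < m) :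
    Psi (p ^ m) = p ^ (∑ k ∈ Finset.Icc 1 m, smarandache (p ^ k)) :=
  Psi_prime_pow_general p hp m
end

section
/- For a prime p and k ≤ p, s(p^k) = k·p, where s is the Smarandache function s(n) = min{j ∈ ℕ : n ∣ j!}. -/
open Nat

theorem smarandache_le_iff {n m : ℕ} (hn : n ≠ 0) : smarandache n ≤ m ↔ n ∣ m ! := by
  refine ⟨fun h => ?_, fun h => Nat.sInf_le h⟩
  have hmem : n ∣ (smarandache n)! := Nat.sInf_mem (s := {k | n ∣ k !})
    ⟨n, dvd_factorial (pos_of_ne_zero hn) le_rfl⟩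
  exact hmem.trans (factorial_dvd_factorial h)

theorem Nat.Prime.pow_dvd_factorial_mul {p : ℕ} (hp : p.Prime) (k : ℕ) : p ^ k ∣ (k * p)! := by
  rw [pow_dvd_iff_le_emultiplicity, mul_comm, hp.emultiplicity_factorial_mul]
  exact le_add_self

/-- Below `p ^ 2`, Legendre's formula has the single term `m / p`. -/
theorem Nat.Prime.pow_dvd_factorial_iff_of_lt_sq {p m r : ℕ} (hp : p.Prime) (hm : m < p ^ 2) :
    p ^ r ∣ m ! ↔ r ≤ m / p := by
  rw [hp.pow_dvd_factorial_iff (b := 2) (log_lt_of_lt_pow' two_ne_zero hm)]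
  simp

theorem smarandache_prime_pow_general (p : ℕ) (hp : p.Prime) (k : ℕ)
    (hkp : k ≤ p) : smarandache (p ^ k) = k * p := by
  have hpk : p ^ k ≠ 0 := pow_ne_zero k hp.ne_zero
  refine le_antisymm ((smarandache_le_iff hpk).2 (hp.pow_dvd_factorial_mul k)) (not_lt.1 fun h => ?_)
  have h_lt_sq : smarandache (p ^ k) < p ^ 2 := h.trans_le (sq p ▸ Nat.mul_le_mul_right p hkp)
  have h_dvd := (smarandache_le_iff hpk).1 le_rfl
  rw [hp.pow_dvd_factorial_iff_of_lt_sq h_lt_sq, le_div_iff_mul_le hp.pos] at h_dvd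
  exact h.not_ge h_dvd

/-- For `p` prime and `k ≤ p`, `s(p^k) = k⬝p`. -/
theorem smarandache_prime_pow (p : ℕ) (hp : p.Prime) (k : ℕ) (hk : 0 < k)
    (hkp : k ≤ p) : smarandache (p ^ k) = k * p :=
  smarandache_prime_pow_general p hp k hkp
end

section
/- If R and S are commutative rings with unit, then the ring of polyfunctions G(R ⊕ S) is isomorphic to G(R) ⊕ G(S). In particular, if gcd(m,n) = 1 then G(ℤ/mnℤ) ≅ G(ℤ/mℤ) ⊕ G(ℤ/nℤ). -/
/-!
A polynomial over `R × S` is the same as a pair of polynomials over `R` and `S`, taken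
coefficientwise, and it evaluates componentwise. Hence the polyfunctions on `R × S` are exactly
the maps `(r, s) ↦ (g r, h s)` with `g`, `h` polyfunctions on `R` and `S`, and the pair `(g, h)` is
determined by the map. Polyfunction rings are transported along ring isomorphisms, so the second
part follows from the Chinese remainder theorem `ZMod (m * n) ≃+* ZMod m × ZMod n`.
-/

/-- The ring of polyfunctions over a commutative ring `R`: the subring of
`R → R` consisting of functions represented by a polynomial. -/
noncomputable def polyfunRing (R : Type) [CommRing R] : Subring (R → R) :=
  (Pi.ringHom (fun x : R => Polynomial.evalRingHom x)).range

open Polynomial Function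

theorem RingHom.range_comp_of_surjective {A B C : Type*} [Ring A] [Ring B] [Ring C]
    (f : B →+* C) {g : A →+* B} (hg : Surjective g) : (f.comp g).range = f.range :=
  SetLike.coe_injective (hg.range_comp f)

namespace Polynomial

variable {R S : Type*} [CommRing R] [CommRing S]

theorem fst_eval (P : (R × S)[X]) (x : R × S) :
    (P.eval x).1 = (P.map (RingHom.fst R S)).eval x.1 := by
  rw [eval_map]
  exact (eval₂_at_apply (RingHom.fst R S) x).symm

theorem snd_eval (P : (R × S)[X]) (x : R × S) :
    (P.eval x).2 = (P.map (RingHom.snd R S)).eval x.2 := by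
  rw [eval_map]
  exact (eval₂_at_apply (RingHom.snd R S) x).symm

theorem map_fst_prod_map_snd_surjective :
    Surjective ((mapRingHom (RingHom.fst R S)).prod (mapRingHom (RingHom.snd R S))) := by
  rintro ⟨p, q⟩
  obtain ⟨P, rfl⟩ := map_surjective _ (RingHom.fst R S).surjective p
  obtain ⟨Q, rfl⟩ := map_surjective _ (RingHom.snd R S).surjective q
  refine ⟨C (1, 0) * P + C (0, 1) * Q, ?_⟩
  simp [Polynomial.map_add, Polynomial.map_mul]

end Polynomial

namespace polyfunRing

variable {R R' S : Type} [CommRing R] [CommRing R'] [CommRing S]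

variable (R) in
noncomputable abbrev evalFun : R[X] →+* (R → R) :=
  RingHom.pi fun x => evalRingHom x

theorem eq_range_evalFun : polyfunRing R = (evalFun R).range := rfl

/-- Conjugation `f ↦ e ∘ f ∘ e.symm` by a ring isomorphism `e`. -/
def conjRingEquiv (e : R ≃+* R') : (R → R) ≃+* (R' → R') :=
  { MulEquiv.arrowCongr e.toEquiv e.toMulEquiv with
    map_add' := fun _ _ => funext fun _ => map_add e _ _ }

theorem conjRingEquiv_comp_evalFun (e : R ≃+* R') :
    (conjRingEquiv e : (R → R) →+* (R' → R')).comp (evalFun R) =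
      (evalFun R').comp (mapRingHom e) := by
  refine RingHom.ext fun p => funext fun y => ?_
  simpa [conjRingEquiv, eval_map] using (eval₂_at_apply (e : R →+* R') (e.symm y)).symm

theorem map_conjRingEquiv (e : R ≃+* R') :
    (polyfunRing R).map (conjRingEquiv e : (R → R) →+* (R' → R')) = polyfunRing R' := by
  rw [eq_range_evalFun, eq_range_evalFun, RingHom.map_range, conjRingEquiv_comp_evalFun,
    RingHom.range_comp_of_surjective _ (map_surjective _ e.surjective)]

noncomputable def congr (e : R ≃+* R') : polyfunRing R ≃+* polyfunRing R' :=
  (Subring.equivMapOfInjective _ _ (conjRingEquiv e).injective).trans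
    (RingEquiv.subringCongr (map_conjRingEquiv e))

variable (R S) in
def prodMapHom : (R → R) × (S → S) →+* (R × S → R × S) where
  toFun gh := Prod.map gh.1 gh.2
  map_one' := rfl
  map_mul' _ _ := rfl
  map_zero' := rfl
  map_add' _ _ := rfl

theorem prodMapHom_injective : Injective (prodMapHom R S) := fun _ _ h =>
  Prod.ext (funext fun r => congrArg Prod.fst (congrFun h (r, 0)))
    (funext fun s => congrArg Prod.snd (congrFun h (0, s)))

theorem evalFun_prod : evalFun (R × S) = (prodMapHom R S).comp
    (((evalFun R).prodMap (evalFun S)).comp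
      ((mapRingHom (RingHom.fst R S)).prod (mapRingHom (RingHom.snd R S)))) :=
  RingHom.ext fun P => funext fun x => Prod.ext (fst_eval P x) (snd_eval P x)

theorem map_prodMapHom :
    ((polyfunRing R).prod (polyfunRing S)).map (prodMapHom R S) = polyfunRing (R × S) := by
  rw [eq_range_evalFun, eq_range_evalFun, eq_range_evalFun, ← RingHom.range_prodMap,
    RingHom.map_range, evalFun_prod, ← RingHom.comp_assoc,
    RingHom.range_comp_of_surjective _ (map_fst_prod_map_snd_surjective (R := R) (S := S))]

noncomputable def prodEquiv : polyfunRing (R × S) ≃+* polyfunRing R × polyfunRing S :=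
  (RingEquiv.subringCongr map_prodMapHom.symm).trans
    ((Subring.equivMapOfInjective _ _ prodMapHom_injective).symm.trans (Subring.prodEquiv _ _))

end polyfunRing

/-- `G(R ⊕ S) ≅ G(R) ⊕ G(S)`; in particular `G(ℤ/mnℤ) ≅ G(ℤ/mℤ) ⊕ G(ℤ/nℤ)`
when `gcd m n = 1`. -/
theorem polyfunRing_prod :
    (∀ (R S : Type) [CommRing R] [CommRing S],
      Nonempty (polyfunRing (R × S) ≃+* polyfunRing R × polyfunRing S)) ∧
    (∀ m n : ℕ, Nat.Coprime m n →
      Nonempty (polyfunRing (ZMod (m * n)) ≃+*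
        polyfunRing (ZMod m) × polyfunRing (ZMod n))) :=
  ⟨fun _ _ _ _ => ⟨polyfunRing.prodEquiv⟩,
    fun _ _ h => ⟨(polyfunRing.congr (ZMod.chineseRemainder h)).trans polyfunRing.prodEquiv⟩⟩
end

section
/- Let p be prime and m ∈ ℕ. The ring ℤ_{p^m}[x]/I_{p,m}, where I_{p,m} = {f ∈ ℤ_{p^m}[x] : f(kp) = 0 for all k}, is indecomposable: it contains exactly two idempotent elements. -/
/-!
Reducing mod `p` the value at `0` gives a ring map `ℤ_{p^m}[x]/I_{p,m} → 𝔽_p` with nil kernel: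
if `p ∣ f(0)` then `p ∣ f(kp)` for every `k`, so `f^m` vanishes at every multiple of `p`.
Idempotents congruent modulo a nilpotent element are equal, and `𝔽_p` has only the
idempotents `0` and `1`.
-/

/-- The ideal `I_{p,m}` of polynomials over `ℤ/p^mℤ` vanishing on all
multiples of `p`, realized as the kernel of evaluation at all multiples of
`p`. -/
noncomputable def Ipm (p m : ℕ) : Ideal (Polynomial (ZMod (p ^ m))) :=
  RingHom.ker (Pi.ringHom (fun k : ZMod (p ^ m) => Polynomial.evalRingHom (k * p)))

open Polynomial

theorem isIdempotentElem_iff_eq_zero_or_one_of_ker_isNilpotent {A K : Type*} [CommRing A]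
    [Ring K] [IsLeftCancelMulZero K] (φ : A →+* K) (h : ∀ x ∈ RingHom.ker φ, IsNilpotent x)
    {e : A} : IsIdempotentElem e ↔ e = 0 ∨ e = 1 := by
  refine ⟨fun he => ?_, by rintro (rfl | rfl) <;> simp [IsIdempotentElem]⟩
  refine (IsIdempotentElem.iff_eq_zero_or_one.mp (he.map φ)).imp (fun h0 => ?_) (fun h1 => ?_)
  · exact eq_of_isNilpotent_sub_of_isIdempotentElem he .zero (h _ (by simp [h0]))
  · exact eq_of_isNilpotent_sub_of_isIdempotentElem he .one (h _ (by simp [h1]))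

theorem Polynomial.map_eval_eq_of_map_eq {R S : Type*} [CommSemiring R] [Semiring S]
    (φ : R →+* S) {a b : R} (h : φ a = φ b) (f : R[X]) : φ (f.eval a) = φ (f.eval b) := by
  rw [← eval_map_apply, h, eval_map_apply]

theorem ZMod.pow_eq_zero_of_castHom_eq_zero {p m : ℕ} [NeZero p] (h : p ∣ p ^ m)
    {y : ZMod (p ^ m)} (hy : ZMod.castHom h (ZMod p) y = 0) : y ^ m = 0 := by
  rw [ZMod.castHom_apply, ZMod.cast_eq_val, ZMod.natCast_eq_zero_iff] at hy
  obtain ⟨c, hc⟩ := hy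
  rw [← ZMod.natCast_zmod_val y, hc, Nat.cast_mul, mul_pow, ← Nat.cast_pow, ZMod.natCast_self,
    zero_mul]

section Ipm

variable {p m : ℕ}

theorem mem_Ipm_iff {f : (ZMod (p ^ m))[X]} :
    f ∈ Ipm p m ↔ ∀ k : ZMod (p ^ m), f.eval (k * p) = 0 := by
  simp only [Ipm, RingHom.mem_ker, funext_iff]
  rfl

theorem eval_zero_eq_zero_of_mem_Ipm {f : (ZMod (p ^ m))[X]} (hf : f ∈ Ipm p m) :
    f.eval 0 = 0 := by
  simpa using mem_Ipm_iff.mp hf 0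

theorem pow_mem_Ipm_of_castHom_eval_zero_eq_zero [NeZero p] (h : p ∣ p ^ m)
    {f : (ZMod (p ^ m))[X]} (hf : ZMod.castHom h (ZMod p) (f.eval 0) = 0) : f ^ m ∈ Ipm p m := by
  refine mem_Ipm_iff.mpr fun k => ?_
  rw [eval_pow]
  refine ZMod.pow_eq_zero_of_castHom_eq_zero h ?_
  have hkp : ZMod.castHom h (ZMod p) (k * p) = ZMod.castHom h (ZMod p) 0 := by
    rw [map_mul, map_natCast, ZMod.natCast_self, mul_zero, map_zero]
  rw [Polynomial.map_eval_eq_of_map_eq _ hkp f, hf]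

end Ipm

/-- The ring `ℤ_{p^m}[x]/I_{p,m}` is indecomposable: it has exactly two
idempotents, `0` and `1`. -/
theorem quotient_indecomposable (p : ℕ) (hp : p.Prime) (m : ℕ) (hm : 0 < m) :
    {e : Polynomial (ZMod (p ^ m)) ⧸ Ipm p m | IsIdempotentElem e} = {0, 1} := by
  have := Fact.mk hp
  have hdvd : p ∣ p ^ m := dvd_pow_self p hm.ne'
  let φ : (ZMod (p ^ m))[X] ⧸ Ipm p m →+* ZMod p :=
    Ideal.Quotient.lift _ ((ZMod.castHom hdvd (ZMod p)).comp (evalRingHom 0))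
      (fun f hf => by simp [eval_zero_eq_zero_of_mem_Ipm hf])
  have hnil : ∀ x ∈ RingHom.ker φ, IsNilpotent x := by
    intro x hx
    obtain ⟨f, rfl⟩ := Ideal.Quotient.mk_surjective x
    refine ⟨m, ?_⟩
    rw [← map_pow, Ideal.Quotient.eq_zero_iff_mem]
    exact pow_mem_Ipm_of_castHom_eval_zero_eq_zero hdvd hx
  ext e
  exact isIdempotentElem_iff_eq_zero_or_one_of_ker_isNilpotent φ hnil
end

section
/- Let p be prime, m ∈ ℕ, and define e*(k) := max{x ∈ ℕ : p^x ∣ p^k·k!} for k < s*(p^m) and e*(s*(p^m)) := m, where s*(p^m) := min{x ∈ ℕ : p^m ∣ p^x·x!}. Then for every k ∈ {1, ..., s*(p^m)}, the polynomial b*_k(x) := p^{m−e*(k)} · ∏_{j=1}^{k}(x + jp) satisfies b*_k(jp) ≡ 0 (mod p^m) for all integers j. -/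
/-!
Factoring `p` out of every term, `∏_{l=1}^k (jp + lp) = p^k ∏_{l=1}^k (j + l)`, and a product of
`k` consecutive integers is divisible by `k!`; so `p^k k!` divides the product. By the choice of
`e*(k)`, `p^{e*(k)}` divides `p^k k!` (for `k = s*(p^m)` this is the defining property of
`s*(p^m)`), and `p^m ∣ p^{m - e*(k)} p^{e*(k)}` also when the truncated subtraction is `0`.
-/

/-- `s*(p^m) = min{x ≥ 1 : p^m ∣ p^x x!}`. -/
noncomputable def sStar (p m : ℕ) : ℕ := sInf {x : ℕ | 0 < x ∧ p ^ m ∣ p ^ x * Nat.factorial x}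

/-- `e*(k) = max{x : p^x ∣ p^k k!}` for `k < s*(p^m)`, and `e*(s*(p^m)) = m`. -/
noncomputable def eStar (p m k : ℕ) : ℕ :=
  if k = sStar p m then m else (p ^ k * Nat.factorial k).factorization p

open Finset Nat

theorem prod_Icc_add_eq_ascPochhammer_eval {R : Type*} [CommSemiring R] (k : ℕ) (r : R) :
    ∏ l ∈ Icc 1 k, (r + l) = (ascPochhammer R k).eval (r + 1) := by
  induction k with
  | zero => simp
  | succ n ih =>
    rw [prod_Icc_succ_top (by omega), ih, ascPochhammer_succ_eval]
    push_cast
    ring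

theorem factorial_dvd_prod_Icc_add (k : ℕ) (j : ℤ) : (k ! : ℤ) ∣ ∏ l ∈ Icc 1 k, (j + l) := by
  refine ⟨Ring.multichoose (j + 1) k, ?_⟩
  rw [prod_Icc_add_eq_ascPochhammer_eval, ← Polynomial.ascPochhammer_smeval_eq_eval,
    ← Ring.factorial_nsmul_multichoose_eq_ascPochhammer, nsmul_eq_mul]

theorem pow_mul_factorial_dvd_prod_Icc (p k : ℕ) (j : ℤ) :
    (p : ℤ) ^ k * k ! ∣ ∏ l ∈ Icc 1 k, (j * p + l * p) := by
  have hfactor : ∏ l ∈ Icc 1 k, (j * p + l * p) = (p : ℤ) ^ k * ∏ l ∈ Icc 1 k, (j + l) := by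
    simp only [← add_mul, prod_mul_distrib, prod_const, Nat.card_Icc, add_tsub_cancel_right]
    ring
  rw [hfactor]
  exact mul_dvd_mul_left _ (factorial_dvd_prod_Icc_add k j)

theorem pow_dvd_pow_sStar_mul_factorial (p m : ℕ) :
    p ^ m ∣ p ^ sStar p m * (sStar p m)! := by
  rcases Nat.eq_zero_or_pos m with rfl | hm
  · exact one_dvd _
  · exact (Nat.sInf_mem (s := {x | 0 < x ∧ p ^ m ∣ p ^ x * x !}) ⟨m, hm, dvd_mul_right _ _⟩).2

theorem pow_eStar_dvd (p m k : ℕ) : p ^ eStar p m k ∣ p ^ k * k ! := by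
  unfold eStar
  split_ifs with hk
  · exact hk ▸ pow_dvd_pow_sStar_mul_factorial p m
  · exact ordProj_dvd _ _

theorem basic_polynomial_in_Ipm_general (p : ℕ) (m : ℕ)
    (k : ℕ) (j : ℤ) :
    ((p : ℤ) ^ m) ∣ (p : ℤ) ^ (m - eStar p m k) *
      ∏ l ∈ Finset.Icc 1 k, (j * p + l * p) := by
  have hpe : (p : ℤ) ^ eStar p m k ∣ (p : ℤ) ^ k * k ! := by
    exact_mod_cast pow_eStar_dvd p m k
  calc (p : ℤ) ^ m ∣ (p : ℤ) ^ (m - eStar p m k) * (p : ℤ) ^ eStar p m k := by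
        rw [← pow_add]; exact pow_dvd_pow _ le_tsub_add
    _ ∣ (p : ℤ) ^ (m - eStar p m k) * ((p : ℤ) ^ k * k !) := mul_dvd_mul_left _ hpe
    _ ∣ _ := mul_dvd_mul_left _ (pow_mul_factorial_dvd_prod_Icc p k j)

/-- For every `k ∈ {1, …, s*(p^m)}`, the polynomial
`b*_k(x) = p^{m - e*(k)} ∏_{j=1}^k (x + jp)` vanishes modulo `p^m` at every
multiple of `p`. -/
theorem basic_polynomial_in_Ipm (p : ℕ) (hp : p.Prime) (m : ℕ) (hm : 0 < m)
    (k : ℕ) (hk : 1 ≤ k) (hks : k ≤ sStar p m) (j : ℤ) :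
    ((p : ℤ) ^ m) ∣ (p : ℤ) ^ (m - eStar p m k) *
      ∏ l ∈ Finset.Icc 1 k, (j * p + l * p) :=
  basic_polynomial_in_Ipm_general p m k j
end

section
/- Let n ≥ 2, d ∈ ℕ, a ∈ ℤ/nℤ, and 𝐤 ∈ ℕ₀^d. Then the monomial a·𝐱^𝐤 is reducible modulo n (i.e., there exists p ∈ (ℤ/nℤ)[x₁,...,x_d] of total degree < |𝐤| with a·𝐱^𝐤 = p(𝐱) for all 𝐱 ∈ (ℤ/nℤ)^d) if and only if n divides a·𝐤!, where 𝐤! = k₁!·k₂!···k_d!. -/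
/-!
Write `Δ^𝐤 F = ∑_{𝐣 ≤ 𝐤} ∏ᵢ (-1)^{kᵢ-jᵢ} C(kᵢ,jᵢ) F(𝐣)` for the mixed forward difference at `0`.
It factors over monomials into one-variable differences, so it kills `𝐱^𝐦` as soon as some
`mᵢ < kᵢ`, in particular every monomial of a polynomial of total degree `< |𝐤|`, while it sends
`a·𝐱^𝐤` to `a·𝐤!`. Hence a reducible `a·𝐱^𝐤` has `𝐤!·a = 0`.

Conversely `a·∏ᵢ xᵢ(xᵢ+1)⋯(xᵢ+kᵢ-1)` equals `a·𝐱^𝐤` up to terms of lower degree, and it vanishes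
identically on `(ℤ/nℤ)^d` because a product of `kᵢ` consecutive integers is divisible by `kᵢ!`.
Their difference is the reducing polynomial.
-/

open Finset MvPolynomial fwdDiff Nat

section MixedDifference

variable {σ R : Type*} [Fintype σ] [DecidableEq σ] [CommRing R]

/-- `∏ᵢ Δ_{eᵢ}^{kᵢ}` applied to `F` and evaluated at `0`, expanded by
`fwdDiff_iter_eq_sum_shift`. -/
noncomputable def mixedFwdDiff (k : σ → ℕ) : ((σ → R) → R) →ₗ[R] R :=
  ∑ j ∈ Fintype.piFinset fun i ↦ range (k i + 1),
    (∏ i, (-1 : R) ^ (k i - j i) * (k i).choose (j i)) • LinearMap.proj fun i ↦ (j i : R)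

theorem mixedFwdDiff_prod (k : σ → ℕ) (g : σ → R → R) :
    mixedFwdDiff k (fun x ↦ ∏ i, g i (x i)) = ∏ i, (fwdDiff 1)^[k i] (g i) 0 := by
  simp only [mixedFwdDiff, LinearMap.coe_sum, Finset.sum_apply, LinearMap.smul_apply,
    LinearMap.proj_apply, smul_eq_mul, fwdDiff_iter_eq_sum_shift, prod_univ_sum, zsmul_eq_mul,
    zero_add, nsmul_one, ← prod_mul_distrib]
  push_cast
  rfl

theorem mixedFwdDiff_prod_pow_of_lt {k m : σ → ℕ} {i : σ} (h : m i < k i) :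
    mixedFwdDiff k (fun x : σ → R ↦ ∏ i, x i ^ m i) = 0 := by
  rw [mixedFwdDiff_prod k fun i r ↦ r ^ m i]
  exact prod_eq_zero (mem_univ i) (by rw [fwdDiff_iter_pow_eq_zero_of_lt h, Pi.zero_apply])

theorem mixedFwdDiff_prod_pow_self (k : σ → ℕ) :
    mixedFwdDiff k (fun x : σ → R ↦ ∏ i, x i ^ k i) = ∏ i, ((k i)! : R) := by
  rw [mixedFwdDiff_prod k fun i r ↦ r ^ k i]
  simp only [fwdDiff_iter_eq_factorial, Pi.natCast_apply]

theorem mixedFwdDiff_eval_eq_zero {k : σ → ℕ} {p : MvPolynomial σ R}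
    (hp : p.totalDegree < ∑ i, k i) : mixedFwdDiff k (fun x ↦ eval x p) = 0 := by
  have hsum : (fun x ↦ eval x p) = ∑ m ∈ p.support, coeff m p • fun x ↦ ∏ i, x i ^ m i := by
    ext x
    simp [eval_eq', Finset.sum_apply]
  rw [hsum, map_sum]
  refine sum_eq_zero fun m hm ↦ ?_
  have hm' : ∑ i, m i < ∑ i, k i := by
    simpa [Finsupp.sum_fintype] using (le_totalDegree hm).trans_lt hp
  obtain ⟨i, -, hi⟩ := exists_lt_of_sum_lt hm'
  rw [map_smul, mixedFwdDiff_prod_pow_of_lt hi, smul_zero]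

end MixedDifference

namespace MvPolynomial

variable {σ R : Type*} [CommRing R]

theorem totalDegree_X_pow_le (i : σ) (t : ℕ) : (X i ^ t : MvPolynomial σ R).totalDegree ≤ t := by
  simpa [X_pow_eq_monomial] using totalDegree_monomial_le (Finsupp.single i t) (1 : R)

theorem eq_zero_or_totalDegree_mul_lt {p q : MvPolynomial σ R} {D E : ℕ}
    (hp : p.totalDegree ≤ D) (hq : q = 0 ∨ q.totalDegree < E) :
    p * q = 0 ∨ (p * q).totalDegree < D + E := by
  rcases hq with rfl | hq
  · exact Or.inl (mul_zero p)
  · exact Or.inr ((totalDegree_mul p q).trans_lt (by omega))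

theorem eq_zero_or_totalDegree_add_lt {p q : MvPolynomial σ R} {D : ℕ}
    (hp : p = 0 ∨ p.totalDegree < D) (hq : q = 0 ∨ q.totalDegree < D) :
    p + q = 0 ∨ (p + q).totalDegree < D := by
  rcases hp with rfl | hp
  · rwa [zero_add]
  rcases hq with rfl | hq
  · rw [add_zero]
    exact Or.inr hp
  · exact Or.inr ((totalDegree_add p q).trans_lt (max_lt hp hq))

theorem totalDegree_toMvPolynomial_le (i : σ) (f : Polynomial R) :
    (f.toMvPolynomial i).totalDegree ≤ f.natDegree := by
  rw [Polynomial.toMvPolynomial, Polynomial.aeval_eq_sum_range]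
  refine (totalDegree_finsetSum _ _).trans (Finset.sup_le fun t ht ↦ ?_)
  calc (f.coeff t • X i ^ t : MvPolynomial σ R).totalDegree
      ≤ (X i ^ t : MvPolynomial σ R).totalDegree := totalDegree_smul_le _ _
    _ ≤ t := totalDegree_X_pow_le i t
    _ ≤ f.natDegree := Nat.lt_succ_iff.mp (mem_range.mp ht)

theorem eq_zero_or_totalDegree_X_pow_sub_toMvPolynomial_lt {f : Polynomial R}
    (hf : f.Monic) (i : σ) :
    X i ^ f.natDegree - f.toMvPolynomial i = 0 ∨
      (X i ^ f.natDegree - f.toMvPolynomial i).totalDegree < f.natDegree := by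
  have hlead : X i ^ f.natDegree - f.toMvPolynomial i = -f.eraseLead.toMvPolynomial i := by
    rw [← Polynomial.self_sub_monomial_natDegree_leadingCoeff, hf.leadingCoeff,
      Polynomial.monomial_one_right_eq_X_pow]
    simp
  rw [hlead, neg_eq_zero, totalDegree_neg]
  rcases f.eraseLead_natDegree_lt_or_eraseLead_eq_zero with h | h
  · exact Or.inr ((totalDegree_toMvPolynomial_le i f.eraseLead).trans_lt h)
  · exact Or.inl (by rw [h, map_zero])

theorem eq_zero_or_totalDegree_prod_X_pow_sub_prod_toMvPolynomial_lt {f : σ → Polynomial R}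
    (hf : ∀ i, (f i).Monic) (s : Finset σ) :
    ∏ i ∈ s, X i ^ (f i).natDegree - ∏ i ∈ s, (f i).toMvPolynomial i = 0 ∨
      (∏ i ∈ s, X i ^ (f i).natDegree - ∏ i ∈ s, (f i).toMvPolynomial i).totalDegree <
        ∑ i ∈ s, (f i).natDegree := by
  classical
  induction s using Finset.induction_on with
  | empty => simp
  | insert i s hi ih =>
    rw [prod_insert hi, prod_insert hi, sum_insert hi]
    set A : MvPolynomial σ R := ∏ j ∈ s, X j ^ (f j).natDegree
    set B := ∏ j ∈ s, (f j).toMvPolynomial j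
    have hsplit : X i ^ (f i).natDegree * A - (f i).toMvPolynomial i * B =
        X i ^ (f i).natDegree * (A - B) + B * (X i ^ (f i).natDegree - (f i).toMvPolynomial i) := by
      ring
    have hB : B.totalDegree ≤ ∑ j ∈ s, (f j).natDegree :=
      (totalDegree_finsetProd _ _).trans
        (sum_le_sum fun j _ ↦ totalDegree_toMvPolynomial_le j (f j))
    rw [hsplit]
    refine eq_zero_or_totalDegree_add_lt
      (eq_zero_or_totalDegree_mul_lt (totalDegree_X_pow_le _ _) ih) ?_
    rw [add_comm]
    exact eq_zero_or_totalDegree_mul_lt hB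
      (eq_zero_or_totalDegree_X_pow_sub_toMvPolynomial_lt (hf i) i)

end MvPolynomial

theorem monic_ascPochhammer' (S : Type*) [Semiring S] (k : ℕ) : (ascPochhammer S k).Monic := by
  rw [← ascPochhammer_map (Nat.castRingHom S)]
  exact (monic_ascPochhammer ℕ k).map _

theorem ascPochhammer_natDegree' (S : Type*) [Semiring S] [Nontrivial S] (k : ℕ) :
    (ascPochhammer S k).natDegree = k := by
  rw [← ascPochhammer_map (Nat.castRingHom S), (monic_ascPochhammer ℕ k).natDegree_map,
    ascPochhammer_natDegree]

theorem natCast_factorial_dvd_ascPochhammer_eval (S : Type*) [Semiring S] (m k : ℕ) :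
    (k ! : S) ∣ (ascPochhammer S k).eval (m : S) := by
  rw [ascPochhammer_nat_eq_natCast_ascFactorial]
  exact Nat.cast_dvd_cast (Nat.factorial_dvd_ascFactorial m k)

theorem mul_prod_ascPochhammer_eval_eq_zero {σ R : Type*} [Fintype σ] [CommRing R]
    {k : σ → ℕ} {a : R} (h : (∏ i, ((k i)! : R)) * a = 0) (x : σ → ℕ) :
    a * ∏ i, (ascPochhammer R (k i)).eval (x i : R) = 0 := by
  obtain ⟨c, hc⟩ := prod_dvd_prod_of_dvd _ _ fun i _ ↦
    natCast_factorial_dvd_ascPochhammer_eval R (x i) (k i)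
  rw [hc, ← mul_assoc, mul_comm a, h, zero_mul]

/-- A monomial `a ⬝ 𝐱^𝐤` over `ℤ/nℤ` is reducible (representable by a
polynomial of total degree `< |𝐤|`, with the convention `deg 0 = -∞`) if and
only if `n ∣ a ⬝ 𝐤!`. -/
theorem monomial_reducible_iff (n : ℕ) (hn : 2 ≤ n) (d : ℕ) (a : ZMod n)
    (k : Fin d → ℕ) :
    (∃ p : MvPolynomial (Fin d) (ZMod n),
        (p = 0 ∨ p.totalDegree < ∑ i, k i) ∧
        ∀ x : Fin d → ZMod n, MvPolynomial.eval x p = a * ∏ i, x i ^ k i)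
      ↔ (∏ i, Nat.factorial (k i) : ZMod n) * a = 0 := by
  have : Fact (1 < n) := ⟨hn⟩
  constructor
  · rintro ⟨p, hdeg, hp⟩
    have hvanish : mixedFwdDiff k (fun x ↦ eval x p) = 0 := by
      rcases hdeg with rfl | hdeg
      · simp only [map_zero]
        exact map_zero (mixedFwdDiff k)
      · exact mixedFwdDiff_eval_eq_zero hdeg
    have hmonomial : mixedFwdDiff k (fun x ↦ a * ∏ i, x i ^ k i) = a * ∏ i, ((k i)! : ZMod n) := by
      rw [← mixedFwdDiff_prod_pow_self, ← smul_eq_mul, ← map_smul]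
      rfl
    rw [mul_comm, ← hmonomial, ← hvanish, funext hp]
  · intro h
    refine ⟨C a * (∏ i, X i ^ k i - ∏ i, (ascPochhammer (ZMod n) (k i)).toMvPolynomial i),
      ?_, fun x ↦ ?_⟩
    · have hlow := eq_zero_or_totalDegree_prod_X_pow_sub_prod_toMvPolynomial_lt
        (fun i ↦ monic_ascPochhammer' (ZMod n) (k i)) univ
      simp only [ascPochhammer_natDegree'] at hlow
      simpa using eq_zero_or_totalDegree_mul_lt (totalDegree_C a).le hlow
    · have hx : x = fun i ↦ ((x i).val : ZMod n) := by simp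
      simp only [map_mul, map_sub, map_prod, eval_C, eval_X, map_pow, eval_toMvPolynomial, mul_sub]
      rw [hx, mul_prod_ascPochhammer_eval_eq_zero h, sub_zero, ← hx]
end
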